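/- Let n ≥ 1, let D ⊆ ℂⁿ be open, let Ω ⊆ ℂ be open, let f : Ω → D be holomorphic, and let u : D → ℝ be C². Then for every ζ ∈ Ω, Δ(u∘f)(ζ) = Q(u)_{f(ζ)}(f'(ζ)), where Δ is the Euclidean Laplacian on ℝ² ≅ ℂ and f'(ζ) is the complex derivative of f at ζ. In particular, if Q(u)_z(v) ≥ 0 for all z ∈ D and v ∈ ℂⁿ, then u ∘ f is subharmonic for every holomorphic disk f in D. -/

import Mathlib

open Filter Topology

/-- The Levi quadratic form for the standard complex structure of ℂⁿ:
`Q(u)_z(v) := D²u_z(v,v) + D²u_z(iv,iv)`. -/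
noncomputable def leviQ {n : ℕ} (u : EuclideanSpace ℂ (Fin n) → ℝ)
    (z v : EuclideanSpace ℂ (Fin n)) : ℝ :=
  fderiv ℝ (fderiv ℝ u) z v v
    + fderiv ℝ (fderiv ℝ u) z (Complex.I • v) (Complex.I • v)

/-- Euclidean Laplacian of a function on ℂ ≅ ℝ². -/
noncomputable def lap (g : ℂ → ℝ) (ζ : ℂ) : ℝ :=
  fderiv ℝ (fun w => fderiv ℝ g w 1) ζ 1
    + fderiv ℝ (fun w => fderiv ℝ g w Complex.I) ζ Complex.I

/-- For a holomorphic disk `f` in `D ⊆ ℂⁿ` and a C² function `u` on `D`,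
`Δ(u∘f)(ζ) = Q(u)_{f(ζ)}(f'(ζ))`; in particular if `Q(u) ≥ 0` everywhere then
`u ∘ f` is subharmonic. -/
theorem stmt_8 {n : ℕ} (hn : 1 ≤ n)
    (D : Set (EuclideanSpace ℂ (Fin n))) (hD : IsOpen D)
    (Ω : Set ℂ) (hΩ : IsOpen Ω)
    (f : ℂ → EuclideanSpace ℂ (Fin n))
    (hf : DifferentiableOn ℂ f Ω) (hfD : Set.MapsTo f Ω D)
    (u : EuclideanSpace ℂ (Fin n) → ℝ)
    (hu : ContDiffOn ℝ 2 u D) :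
    (∀ ζ ∈ Ω, lap (u ∘ f) ζ = leviQ u (f ζ) (fderiv ℂ f ζ 1)) ∧
    ((∀ z ∈ D, ∀ v, 0 ≤ leviQ u z v) → ∀ ζ ∈ Ω, 0 ≤ lap (u ∘ f) ζ) := by
  have hmain : ∀ ζ ∈ Ω, lap (u ∘ f) ζ = leviQ u (f ζ) (fderiv ℂ f ζ 1) := by
    intro ζ hζ
    -- f' : complex derivative of f
    set f' : ℂ → EuclideanSpace ℂ (Fin n) := fun w => fderiv ℂ f w 1 with hf'def
    set c : EuclideanSpace ℂ (Fin n) := fderiv ℂ f ζ 1 with hcdef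
    set c₂ : EuclideanSpace ℂ (Fin n) := fderiv ℂ f' ζ 1 with hc2def
    have hmemΩ : Ω ∈ 𝓝 ζ := hΩ.mem_nhds hζ
    have hfζ : DifferentiableAt ℂ f ζ := hf.differentiableAt hmemΩ
    have hfζR : DifferentiableAt ℝ f ζ := hfζ.restrictScalars ℝ
    have hfD' : f ζ ∈ D := hfD hζ
    have hmemD : D ∈ 𝓝 (f ζ) := hD.mem_nhds hfD'
    have hudiff : DifferentiableOn ℝ u D := hu.differentiableOn two_ne_zero
    -- fderiv ℝ u is C¹ on D, so differentiable at f ζ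
    have hu1 : ContDiffOn ℝ 1 (fderiv ℝ u) D := hu.fderiv_of_isOpen hD (by norm_num)
    have hdu : DifferentiableAt ℝ (fderiv ℝ u) (f ζ) :=
      (hu1.differentiableOn one_ne_zero).differentiableAt hmemD
    -- analyticity of f and f'
    have hfan : AnalyticOnNhd ℂ f Ω := hf.analyticOnNhd hΩ
    have hdfan : AnalyticOnNhd ℂ (fderiv ℂ f) Ω := hfan.fderiv
    have hf'ζ : DifferentiableAt ℂ f' ζ :=
      ((hdfan ζ hζ).differentiableAt).clm_apply (differentiableAt_const 1)
    have hf'ζR : DifferentiableAt ℝ f' ζ := hf'ζ.restrictScalars ℝ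
    -- real derivative of f in direction v
    have hfv : ∀ w ∈ Ω, ∀ v : ℂ, fderiv ℝ f w v = v • f' w := by
      intro w hw v
      have hfw : DifferentiableAt ℂ f w := hf.differentiableAt (hΩ.mem_nhds hw)
      have h1 : fderiv ℝ f w v = fderiv ℂ f w v := by
        rw [hfw.fderiv_restrictScalars ℝ]; rfl
      rw [h1, hf'def]
      calc fderiv ℂ f w v = fderiv ℂ f w (v • 1) := by rw [smul_eq_mul, mul_one]
        _ = v • fderiv ℂ f w 1 := (fderiv ℂ f w).map_smul v 1
    -- real derivative of f' in a direction
    have hf'v : ∀ v : ℂ, fderiv ℝ f' ζ v = v • c₂ := by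
      intro v
      have h1 : fderiv ℝ f' ζ v = fderiv ℂ f' ζ v := by
        rw [hf'ζ.fderiv_restrictScalars ℝ]; rfl
      rw [h1, hc2def]
      calc fderiv ℂ f' ζ v = fderiv ℂ f' ζ (v • 1) := by rw [smul_eq_mul, mul_one]
        _ = v • fderiv ℂ f' ζ 1 := (fderiv ℂ f' ζ).map_smul v 1
    -- the key identity for each direction v
    have key : ∀ v : ℂ, fderiv ℝ (fun w => fderiv ℝ (u ∘ f) w v) ζ v
        = fderiv ℝ (fderiv ℝ u) (f ζ) (v • c) (v • c)
          + fderiv ℝ u (f ζ) (v • v • c₂) := by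
      intro v
      have hAe : (fun w => fderiv ℝ (u ∘ f) w v)
          =ᶠ[𝓝 ζ] fun w => fderiv ℝ u (f w) (v • f' w) := by
        filter_upwards [hmemΩ] with w hw
        have hfw : DifferentiableAt ℂ f w := hf.differentiableAt (hΩ.mem_nhds hw)
        have hfwR : DifferentiableAt ℝ f w := hfw.restrictScalars ℝ
        have huw : DifferentiableAt ℝ u (f w) :=
          hudiff.differentiableAt (hD.mem_nhds (hfD hw))
        rw [fderiv_comp w huw hfwR]
        simp only [ContinuousLinearMap.coe_comp', Function.comp_apply]
        rw [hfv w hw v]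
      rw [hAe.fderiv_eq]
      have hc' : DifferentiableAt ℝ (fun w => fderiv ℝ u (f w)) ζ := hdu.comp ζ hfζR
      have hd' : DifferentiableAt ℝ (fun w => v • f' w) ζ := hf'ζR.const_smul v
      rw [fderiv_clm_apply hc' hd']
      have hfc : f' ζ = c := rfl
      have e1 : fderiv ℝ (fun w => fderiv ℝ u (f w)) ζ v
          = fderiv ℝ (fderiv ℝ u) (f ζ) (v • c) := by
        have h := fderiv_comp ζ hdu hfζR
        rw [Function.comp_def] at h
        rw [h, ContinuousLinearMap.comp_apply, hfv ζ hζ v, hfc]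
      have e2 : fderiv ℝ (fun w => v • f' w) ζ v = v • v • c₂ := by
        rw [fderiv_fun_const_smul hf'ζR v, ContinuousLinearMap.smul_apply, hf'v v]
      simp only [ContinuousLinearMap.add_apply, ContinuousLinearMap.flip_apply,
        ContinuousLinearMap.comp_apply]
      rw [e1, e2, hfc]
      exact add_comm _ _
    have k1 := key 1
    have kI := key Complex.I
    simp only [one_smul] at k1
    have hII : Complex.I • Complex.I • c₂ = -c₂ := by
      rw [smul_smul, Complex.I_mul_I, neg_one_smul]
    rw [hII] at kI
    rw [lap, k1, kI, leviQ, map_neg]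
    ring
  refine ⟨hmain, fun hpos ζ hζ => ?_⟩
  rw [hmain ζ hζ]
  exact hpos (f ζ) (hfD hζ) _
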